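/- Let p be a prime, 0 < β < α < 1, and let V(x) := (‖x‖_p + 1)^{−β}. Then for every λ > 0 there exists a locally constant compactly supported function φ : ℚ_p → ℝ such that Q_α(φ) − λ ∫_{ℚ_p} V(x) φ(x)² dm(x) < 0. (There is no positive coupling threshold: the Schrödinger form 𝔇^α − λV has negative spectrum for every λ > 0.) -/

import Mathlib

open MeasureTheory

/-- The `p`-adic Gamma function `Γ_p(z) = (1 - p^(z-1)) / (1 - p^(-z))`. -/
noncomputable def gammaP (p : ℕ) (z : ℝ) : ℝ :=
  (1 - (p : ℝ) ^ (z - 1)) / (1 - (p : ℝ) ^ (-z))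

/-- The Dirichlet form `Q_α` of the Taibleson–Vladimirov operator `𝔇^α`. -/
noncomputable def Qform (p : ℕ) [Fact p.Prime] [MeasurableSpace ℚ_[p]]
    (m : Measure ℚ_[p]) (α : ℝ) (φ : ℚ_[p] → ℝ) : ℝ :=
  -(1 / (2 * gammaP p (-α))) *
    ∫ q : ℚ_[p] × ℚ_[p], (φ q.1 - φ q.2) ^ 2 * ‖q.1 - q.2‖ ^ (-(1 + α)) ∂(m.prod m)

/-!
Test the form on the indicator of the ball `B_k = {‖x‖ ≤ p^k}`. By ultrametricity
`‖x - y‖ = ‖y‖` for `x ∈ B_k`, `y ∉ B_k`, so the energy of `𝟙_{B_k}` is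
`2 m(B_k) ∫_{B_kᶜ} ‖y‖^{-(1+α)}`; splitting `B_kᶜ` into the annuli `p^j ≤ ‖y‖ < p^{j+1}`
bounds it by a geometric series, giving `Q_α(𝟙_{B_k}) = O(p^{k(1-α)})`. Since `V ≥ (p^k + 1)^{-β}`
on `B_k`, the potential term is at least of order `p^{k(1-β)}`, and it wins for large `k`
because `β < α`.
-/

open Metric Filter Topology

section PowerGrowth

variable {E : Type*} [SeminormedAddCommGroup E] [MeasurableSpace E] {μ : Measure E} {P : ℝ}

lemma isFiniteMeasureOnCompacts_of_measure_closedBall_pow_le (hP : 1 < P)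
    (hμ : ∀ j : ℕ, μ (closedBall 0 (P ^ j)) ≤ ENNReal.ofReal (P ^ j)) :
    IsFiniteMeasureOnCompacts μ where
  lt_top_of_isCompact K hK := by
    obtain ⟨R, hKR⟩ := hK.isBounded.subset_closedBall 0
    obtain ⟨j, hj⟩ := pow_unbounded_of_one_lt R hP
    calc μ K ≤ μ (closedBall 0 (P ^ j)) :=
          measure_mono (hKR.trans (closedBall_subset_closedBall hj.le))
      _ < ⊤ := (hμ j).trans_lt ENNReal.ofReal_lt_top

variable {α : ℝ}

lemma setLIntegral_annulus_rpow_le (hP : 1 < P) (hα : 0 < α)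
    (hμ : ∀ j : ℕ, μ (closedBall 0 (P ^ j)) ≤ ENNReal.ofReal (P ^ j)) (j : ℕ) :
    ∫⁻ y in ball 0 (P ^ (j + 1)) \ ball 0 (P ^ j), ENNReal.ofReal (‖y‖ ^ (-(1 + α))) ∂μ
      ≤ ENNReal.ofReal (P * (P ^ (-α)) ^ j) := by
  have hPj : 0 < P ^ j := pow_pos (by linarith) j
  calc ∫⁻ y in ball 0 (P ^ (j + 1)) \ ball 0 (P ^ j), ENNReal.ofReal (‖y‖ ^ (-(1 + α))) ∂μ
      ≤ ∫⁻ _ in ball 0 (P ^ (j + 1)) \ ball 0 (P ^ j),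
          ENNReal.ofReal ((P ^ j) ^ (-(1 + α))) ∂μ := by
        refine setLIntegral_mono measurable_const fun y hy => ENNReal.ofReal_le_ofReal ?_
        have : P ^ j ≤ ‖y‖ := by simpa using hy.2
        exact Real.rpow_le_rpow_of_nonpos hPj this (by linarith)
    _ ≤ ENNReal.ofReal ((P ^ j) ^ (-(1 + α))) * ENNReal.ofReal (P ^ (j + 1)) := by
        rw [setLIntegral_const]
        gcongr
        exact (measure_mono (Set.sdiff_subset.trans ball_subset_closedBall)).trans (hμ _)
    _ = ENNReal.ofReal (P * (P ^ (-α)) ^ j) := by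
        rw [← ENNReal.ofReal_mul (by positivity), Real.rpow_pow_comm (by linarith),
          neg_add, Real.rpow_add hPj, Real.rpow_neg_one, pow_succ]
        field_simp

lemma setLIntegral_compl_closedBall_rpow_le (hP : 1 < P) (hα : 0 < α)
    (hμ : ∀ j : ℕ, μ (closedBall 0 (P ^ j)) ≤ ENNReal.ofReal (P ^ j)) (k : ℕ) :
    ∫⁻ y in (closedBall 0 (P ^ k))ᶜ, ENNReal.ofReal (‖y‖ ^ (-(1 + α))) ∂μ
      ≤ ENNReal.ofReal (P / (1 - P ^ (-α)) * (P ^ k) ^ (-α)) := by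
  have ha0 : 0 ≤ P ^ (-α) := by positivity
  have ha1 : P ^ (-α) < 1 := Real.rpow_lt_one_of_one_lt_of_neg hP (by linarith)
  have hcover : (closedBall (0 : E) (P ^ k))ᶜ ⊆
      ⋃ n : ℕ, ball 0 (P ^ (k + n + 1)) \ ball 0 (P ^ (k + n)) := by
    intro y hy
    have hy : P ^ k < ‖y‖ := by simpa using hy
    have hPk : 0 < P ^ k := pow_pos (by linarith) k
    obtain ⟨n, hn, hn'⟩ := exists_nat_pow_near ((one_le_div hPk).2 hy.le) hP
    rw [le_div_iff₀ hPk, ← pow_add] at hn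
    rw [div_lt_iff₀ hPk, ← pow_add] at hn'
    refine Set.mem_iUnion.2 ⟨n, ?_, ?_⟩
    · simpa [add_right_comm, add_comm k] using hn'
    · simpa [add_comm k] using hn
  calc _ ≤ ∫⁻ y in ⋃ n : ℕ, ball 0 (P ^ (k + n + 1)) \ ball 0 (P ^ (k + n)),
          ENNReal.ofReal (‖y‖ ^ (-(1 + α))) ∂μ := lintegral_mono_set hcover
    _ ≤ ∑' n : ℕ, ENNReal.ofReal (P * (P ^ (-α)) ^ (k + n)) :=
        (lintegral_iUnion_le _ _).trans
          (ENNReal.tsum_le_tsum fun n => setLIntegral_annulus_rpow_le hP hα hμ (k + n))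
    _ = ENNReal.ofReal (∑' n : ℕ, P * (P ^ (-α)) ^ k * (P ^ (-α)) ^ n) := by
        rw [ENNReal.ofReal_tsum_of_nonneg (fun n => by positivity)
          ((summable_geometric_of_lt_one ha0 ha1).mul_left _)]
        simp_rw [pow_add, mul_assoc]
    _ = ENNReal.ofReal (P / (1 - P ^ (-α)) * (P ^ k) ^ (-α)) := by
        rw [tsum_mul_left, tsum_geometric_of_lt_one ha0 ha1, ← Real.rpow_pow_comm (by linarith)]
        ring_nf

end PowerGrowth

section Ultrametric

variable {E : Type*} [NormedAddCommGroup E] [IsUltrametricDist E]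

lemma norm_sub_eq_of_mem_closedBall_of_notMem {R : ℝ} {x y : E} (hx : x ∈ closedBall 0 R)
    (hy : y ∉ closedBall 0 R) : ‖x - y‖ = ‖y‖ := by
  have hxy : ‖x‖ < ‖y‖ := (mem_closedBall_zero_iff.1 hx).trans_lt (by simpa using hy)
  rw [sub_eq_add_neg, IsUltrametricDist.norm_add_eq_max_of_norm_ne_norm (by simpa using hxy.ne),
    norm_neg, max_eq_right hxy.le]

variable [MeasurableSpace E] [BorelSpace E] [SecondCountableTopology E] (μ : Measure E) [SFinite μ]

theorem lintegral_prod_sq_sub_indicator_closedBall (R s : ℝ) :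
    ∫⁻ q : E × E, ENNReal.ofReal (((closedBall 0 R).indicator 1 q.1 -
        (closedBall (0 : E) R).indicator 1 q.2) ^ 2 * ‖q.1 - q.2‖ ^ (-s)) ∂(μ.prod μ)
      = 2 * μ (closedBall 0 R) * ∫⁻ y in (closedBall 0 R)ᶜ, ENNReal.ofReal (‖y‖ ^ (-s)) ∂μ := by
  set B := closedBall (0 : E) R
  have hB : MeasurableSet B := measurableSet_closedBall
  have hinner_mem : ∀ x ∈ B, ∫⁻ y, ENNReal.ofReal ((B.indicator 1 x - B.indicator 1 y) ^ 2 *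
      ‖x - y‖ ^ (-s)) ∂μ = ∫⁻ y in Bᶜ, ENNReal.ofReal (‖y‖ ^ (-s)) ∂μ := by
    intro x hx
    rw [← lintegral_indicator hB.compl]
    congr 1 with y
    by_cases hy : y ∈ B
    · simp [hx, hy]
    · simp [hx, hy, norm_sub_eq_of_mem_closedBall_of_notMem hx hy]
  have hinner_notMem : ∀ x ∈ Bᶜ, ∫⁻ y, ENNReal.ofReal ((B.indicator 1 x - B.indicator 1 y) ^ 2 *
      ‖x - y‖ ^ (-s)) ∂μ = ENNReal.ofReal (‖x‖ ^ (-s)) * μ B := by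
    intro x (hx : x ∉ B)
    rw [← setLIntegral_const, ← lintegral_indicator hB]
    congr 1 with y
    by_cases hy : y ∈ B
    · simp [hx, hy, norm_sub_rev x y, norm_sub_eq_of_mem_closedBall_of_notMem hy hx]
    · simp [hx, hy]
  have hmeas : Measurable fun q : E × E => ENNReal.ofReal ((B.indicator 1 q.1 -
      B.indicator 1 q.2) ^ 2 * ‖q.1 - q.2‖ ^ (-s)) := by
    have hind : Measurable (B.indicator (1 : E → ℝ)) := measurable_const.indicator hB
    fun_prop
  rw [lintegral_prod _ hmeas.aemeasurable, ← lintegral_add_compl _ hB,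
    setLIntegral_congr_fun hB hinner_mem, setLIntegral_congr_fun hB.compl hinner_notMem,
    setLIntegral_const, lintegral_mul_const _ (by fun_prop)]
  ring

end Ultrametric

section Potential

variable {E : Type*} [SeminormedAddCommGroup E] [MeasurableSpace E] [OpensMeasurableSpace E]
  {μ : Measure E}

lemma mul_measureReal_closedBall_le_integral_rpow_mul_sq_indicator {R β : ℝ} (hβ : 0 ≤ β)
    (hμ : μ (closedBall 0 R) ≠ ⊤) :
    (R + 1) ^ (-β) * μ.real (closedBall 0 R)
      ≤ ∫ x, (‖x‖ + 1) ^ (-β) * (closedBall (0 : E) R).indicator 1 x ^ 2 ∂μ := by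
  have hB : MeasurableSet (closedBall (0 : E) R) := measurableSet_closedBall
  have hsq : (fun x => (‖x‖ + 1) ^ (-β) * (closedBall (0 : E) R).indicator 1 x ^ 2)
      = (closedBall 0 R).indicator fun x => (‖x‖ + 1) ^ (-β) := by
    ext x
    by_cases hx : x ∈ closedBall (0 : E) R <;> simp [hx]
  rw [hsq, integral_indicator hB]
  refine setIntegral_ge_of_const_le_real hB hμ (fun x hx => ?_) ?_
  · exact Real.rpow_le_rpow_of_nonpos (by positivity)
      (by linarith [mem_closedBall_zero_iff.1 hx]) (by linarith)
  · refine Measure.integrableOn_of_bounded hμ (by fun_prop : Measurable _).aestronglyMeasurable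
      (M := 1) (ae_of_all _ fun x => ?_)
    rw [Real.norm_of_nonneg (by positivity)]
    exact Real.rpow_le_one_of_one_le_of_nonpos (by linarith [norm_nonneg x]) (by linarith)

end Potential

lemma gammaP_neg_lt_zero {p : ℕ} (hp : 1 < p) {α : ℝ} (hα : 0 < α) : gammaP p (-α) < 0 := by
  have hP : (1 : ℝ) < p := Nat.one_lt_cast.2 hp
  refine div_neg_of_pos_of_neg ?_ ?_
  · linarith [Real.rpow_lt_one_of_one_lt_of_neg hP (by linarith : -α - 1 < 0)]
  · linarith [Real.one_lt_rpow hP (by linarith : 0 < -(-α))]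

noncomputable def ballEnergyConst (p : ℕ) (α : ℝ) : ℝ :=
  -(1 / (2 * gammaP p (-α))) * (2 * (p / (1 - (p : ℝ) ^ (-α))))

lemma Qform_indicator_closedBall_pow_le (p : ℕ) [Fact p.Prime] [MeasurableSpace ℚ_[p]]
    [BorelSpace ℚ_[p]] (m : Measure ℚ_[p]) [SFinite m]
    (hm : ∀ j : ℕ, m (closedBall 0 ((p : ℝ) ^ j)) ≤ ENNReal.ofReal ((p : ℝ) ^ j))
    {α : ℝ} (hα : 0 < α) (k : ℕ) :
    Qform p m α ((closedBall 0 ((p : ℝ) ^ k)).indicator 1)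
      ≤ ballEnergyConst p α * ((p : ℝ) ^ k) ^ (-α) * (p : ℝ) ^ k := by
  have hP : (1 : ℝ) < p := Nat.one_lt_cast.2 (Fact.out : p.Prime).one_lt
  have hc : 0 ≤ -(1 / (2 * gammaP p (-α))) := by
    have := gammaP_neg_lt_zero (Fact.out : p.Prime).one_lt hα
    rw [neg_nonneg, one_div_nonpos]
    linarith
  have hc₁ : 0 < p / (1 - (p : ℝ) ^ (-α)) :=
    div_pos (by linarith) (by linarith [Real.rpow_lt_one_of_one_lt_of_neg hP (neg_neg_of_pos hα)])
  have hmeas : Measurable ((closedBall (0 : ℚ_[p]) ((p : ℝ) ^ k)).indicator (1 : ℚ_[p] → ℝ)) :=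
    measurable_const.indicator measurableSet_closedBall
  have hbound : 2 * m (closedBall 0 ((p : ℝ) ^ k)) *
        ∫⁻ y in (closedBall 0 ((p : ℝ) ^ k))ᶜ, ENNReal.ofReal (‖y‖ ^ (-(1 + α))) ∂m
      ≤ ENNReal.ofReal (2 * (p / (1 - (p : ℝ) ^ (-α))) * ((p : ℝ) ^ k) ^ (-α) * (p : ℝ) ^ k) :=
    calc _ ≤ 2 * ENNReal.ofReal ((p : ℝ) ^ k) *
            ENNReal.ofReal (p / (1 - (p : ℝ) ^ (-α)) * ((p : ℝ) ^ k) ^ (-α)) := by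
          gcongr
          exacts [hm k, setLIntegral_compl_closedBall_rpow_le hP hα hm k]
      _ = _ := by
          rw [← ENNReal.ofReal_ofNat, ← ENNReal.ofReal_mul (by norm_num),
            ← ENNReal.ofReal_mul (by positivity)]
          ring_nf
  rw [Qform, integral_eq_lintegral_of_nonneg_ae (ae_of_all _ fun q => by positivity)
    (by fun_prop), lintegral_prod_sq_sub_indicator_closedBall]
  calc _ ≤ -(1 / (2 * gammaP p (-α))) *
        (2 * (p / (1 - (p : ℝ) ^ (-α))) * ((p : ℝ) ^ k) ^ (-α) * (p : ℝ) ^ k) :=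
      mul_le_mul_of_nonneg_left (ENNReal.toReal_le_of_le_ofReal (by positivity [hc₁]) hbound) hc
    _ = _ := by rw [ballEnergyConst]; ring

lemma Qform_sub_potential_indicator_closedBall_pow_le (p : ℕ) [Fact p.Prime]
    [MeasurableSpace ℚ_[p]] [BorelSpace ℚ_[p]] (m : Measure ℚ_[p])
    (hm : ∀ (x : ℚ_[p]) (k : ℤ),
      m (closedBall x ((p : ℝ) ^ k)) = ENNReal.ofReal ((p : ℝ) ^ k))
    {α β lam : ℝ} (hα : 0 < α) (hβ : 0 ≤ β) (hlam : 0 ≤ lam) (k : ℕ) :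
    Qform p m α ((closedBall 0 ((p : ℝ) ^ k)).indicator 1)
        - lam * ∫ x, (‖x‖ + 1) ^ (-β) * (closedBall 0 ((p : ℝ) ^ k)).indicator 1 x ^ 2 ∂m
      ≤ (ballEnergyConst p α * ((p : ℝ) ^ k) ^ (-(α - β)) - lam * 2 ^ (-β))
          * (((p : ℝ) ^ k) ^ (-β) * (p : ℝ) ^ k) := by
  have hP : (1 : ℝ) < p := Nat.one_lt_cast.2 (Fact.out : p.Prime).one_lt
  have hball : ∀ j : ℕ, m (closedBall 0 ((p : ℝ) ^ j)) ≤ ENNReal.ofReal ((p : ℝ) ^ j) :=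
    fun j => by simpa using (hm 0 j).le
  have := isFiniteMeasureOnCompacts_of_measure_closedBall_pow_le hP hball
  have hQ := Qform_indicator_closedBall_pow_le p m hball hα k
  have hpot := mul_measureReal_closedBall_le_integral_rpow_mul_sq_indicator (μ := m) hβ
    ((hball k).trans_lt ENNReal.ofReal_lt_top).ne
  have hmR : m.real (closedBall 0 ((p : ℝ) ^ k)) = (p : ℝ) ^ k := by
    rw [Measure.real, ← zpow_natCast, hm, ENNReal.toReal_ofReal (by positivity)]
  set R := (p : ℝ) ^ k
  have hR : 1 ≤ R := one_le_pow₀ hP.le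
  have hRβ : 2 ^ (-β) * R ^ (-β) ≤ (R + 1) ^ (-β) := by
    rw [← Real.mul_rpow (by norm_num) (by positivity)]
    exact Real.rpow_le_rpow_of_nonpos (by positivity) (by linarith) (by linarith)
  have hsplit : R ^ (-α) = R ^ (-(α - β)) * R ^ (-β) := by
    rw [← Real.rpow_add (by positivity)]; ring_nf
  rw [hmR] at hpot
  rw [hsplit] at hQ
  nlinarith [mul_le_mul_of_nonneg_left hpot hlam,
    mul_le_mul_of_nonneg_left hRβ (by positivity : 0 ≤ lam * R)]

theorem no_coupling_threshold_general (p : ℕ) [Fact p.Prime]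
    [MeasurableSpace ℚ_[p]] [BorelSpace ℚ_[p]] (m : Measure ℚ_[p])
    (hm : ∀ (x : ℚ_[p]) (k : ℤ),
      m (Metric.closedBall x ((p : ℝ) ^ k)) = ENNReal.ofReal ((p : ℝ) ^ k))
    (α β : ℝ) (hβ0 : 0 < β) (hβα : β < α)
    (V : ℚ_[p] → ℝ) (hV : V = fun x => (‖x‖ + 1) ^ (-β))
    (lam : ℝ) (hlam : 0 < lam) :
    ∃ φ : ℚ_[p] → ℝ, IsLocallyConstant φ ∧ HasCompactSupport φ ∧
      Qform p m α φ - lam * ∫ x : ℚ_[p], V x * φ x ^ 2 ∂m < 0 := by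
  subst hV
  have hP : (1 : ℝ) < p := Nat.one_lt_cast.2 (Fact.out : p.Prime).one_lt
  have hdecay : Tendsto (fun k : ℕ => ballEnergyConst p α * ((p : ℝ) ^ k) ^ (-(α - β)))
      atTop (𝓝 0) := by
    simpa only [mul_zero, Function.comp_def] using ((tendsto_rpow_neg_atTop
      (sub_pos.2 hβα)).comp (tendsto_pow_atTop_atTop_of_one_lt hP)).const_mul _
  obtain ⟨k, hk⟩ :=
    (hdecay.eventually (gt_mem_nhds (by positivity : 0 < lam * 2 ^ (-β)))).exists
  refine ⟨(closedBall 0 ((p : ℝ) ^ k)).indicator 1, ?_, ?_, ?_⟩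
  · exact ((LocallyConstant.const _ 1).indicator
      (IsUltrametricDist.isClopen_closedBall 0 (by positivity))).isLocallyConstant
  · exact HasCompactSupport.intro (isCompact_closedBall 0 _) fun _ hx => Set.indicator_of_notMem hx _
  · exact (Qform_sub_potential_indicator_closedBall_pow_le p m hm (hβ0.trans hβα) hβ0.le
      hlam.le k).trans_lt (mul_neg_of_neg_of_pos (by linarith) (by positivity))

/-- Absence of a coupling threshold: if `0 < β < α < 1` and
`V(x) = (‖x‖_p + 1)^{-β}`, then for every `λ > 0` the Schrödinger form
`Q_α - λ ∫ V φ²` takes a negative value at some locally constant compactly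
supported test function `φ`. -/
theorem no_coupling_threshold (p : ℕ) [Fact p.Prime]
    [MeasurableSpace ℚ_[p]] [BorelSpace ℚ_[p]] (m : Measure ℚ_[p])
    (hm : ∀ (x : ℚ_[p]) (k : ℤ),
      m (Metric.closedBall x ((p : ℝ) ^ k)) = ENNReal.ofReal ((p : ℝ) ^ k))
    (α β : ℝ) (hβ0 : 0 < β) (hβα : β < α) (hα1 : α < 1)
    (V : ℚ_[p] → ℝ) (hV : V = fun x => (‖x‖ + 1) ^ (-β))
    (lam : ℝ) (hlam : 0 < lam) :
    ∃ φ : ℚ_[p] → ℝ, IsLocallyConstant φ ∧ HasCompactSupport φ ∧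
      Qform p m α φ - lam * ∫ x : ℚ_[p], V x * φ x ^ 2 ∂m < 0 :=
  no_coupling_threshold_general p m hm α β hβ0 hβα V hV lam hlam
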